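/- arXiv:1712.03005 — 4 statements merged into one kernel-verified Lean document; each statement's English description precedes it below -/
import Mathlib

section
/- Let F : ℝ^n → ℝ^m be C², H : ℝ^n → ℝ^{m_H} be C², x ∈ H^{-1}(0). Define α(x) = min over v ∈ ker(DH(x)) of max_i ∇F_i(x)·v + (1/2)‖v‖². Then x is Pareto critical (i.e., no v ∈ ker(DH(x)) satisfies DF(x)v < 0 componentwise) if and only if α(x) = 0. -/
private lemma exists_max_fin {m : ℕ} (hm : 0 < m) (g : Fin m → ℝ) :
    ∃ i0, (⨆ i, g i) = g i0 ∧ ∀ i, g i ≤ g i0 := by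
  haveI : Nonempty (Fin m) := ⟨⟨0, hm⟩⟩
  obtain ⟨i0, hi0⟩ := Finite.exists_max g
  exact ⟨i0, le_antisymm (ciSup_le hi0) (le_ciSup (Set.finite_range g).bddAbove i0), hi0⟩

/-- For the equality constrained problem on `M = H⁻¹(0)`, a feasible point `x` is
Pareto critical (no tangent direction `v ∈ ker DH(x)` with `DF(x)v < 0` componentwise)
iff `α(x) = 0`, where `α(x)` is the minimum of `max_i ∇F_i(x)·v + ½‖v‖²` over the kernel. -/
theorem pareto_critical_iff_alpha_zero_eq_constraints (n m mH : ℕ) (hm : 0 < m)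
    (F : EuclideanSpace ℝ (Fin n) → EuclideanSpace ℝ (Fin m))
    (H : EuclideanSpace ℝ (Fin n) → EuclideanSpace ℝ (Fin mH))
    (hF : ContDiff ℝ 2 F) (hH : ContDiff ℝ 2 H)
    (x : EuclideanSpace ℝ (Fin n)) (hx : H x = 0) (α : ℝ)
    (hα : IsLeast {r : ℝ | ∃ v : EuclideanSpace ℝ (Fin n), fderiv ℝ H x v = 0 ∧
      r = (⨆ i, fderiv ℝ F x v i) + (1 / 2) * ‖v‖ ^ 2} α) :
    (¬ ∃ v : EuclideanSpace ℝ (Fin n),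
        fderiv ℝ H x v = 0 ∧ ∀ i, fderiv ℝ F x v i < 0) ↔ α = 0 := by
  haveI : Nonempty (Fin m) := ⟨⟨0, hm⟩⟩
  have hα0 : α ≤ 0 := by
    apply hα.2
    refine ⟨0, by simp, ?_⟩
    simp
  constructor
  · intro hnd
    refine le_antisymm hα0 ?_
    by_contra hneg
    push_neg at hneg
    obtain ⟨v, hv, hval⟩ := hα.1
    have hsup : (⨆ i, fderiv ℝ F x v i) < 0 := by
      nlinarith [sq_nonneg ‖v‖, norm_nonneg v]
    exact hnd ⟨v, hv, fun i =>
      lt_of_le_of_lt (le_ciSup (Set.finite_range _).bddAbove i) hsup⟩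
  · intro hz ⟨v, hv, hdesc⟩
    obtain ⟨i0, hsup, hmax⟩ := exists_max_fin hm (fun i => fderiv ℝ F x v i)
    set c := fderiv ℝ F x v i0 with hc
    have hcneg : c < 0 := hdesc i0
    set t : ℝ := -c / (‖v‖ ^ 2 + 1) with ht
    have hden : (0:ℝ) < ‖v‖ ^ 2 + 1 := by positivity
    have htpos : 0 < t := div_pos (by linarith) hden
    have hmem : (⨆ i, fderiv ℝ F x (t • v) i) + (1/2) * ‖t • v‖ ^ 2 ∈
        {r : ℝ | ∃ w : EuclideanSpace ℝ (Fin n), fderiv ℝ H x w = 0 ∧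
          r = (⨆ i, fderiv ℝ F x w i) + (1 / 2) * ‖w‖ ^ 2} :=
      ⟨t • v, by rw [map_smul, hv, smul_zero], rfl⟩
    have hle := hα.2 hmem
    have hsmul : ∀ i, fderiv ℝ F x (t • v) i = t * fderiv ℝ F x v i := by
      intro i
      rw [map_smul]
      rfl
    have hsup' : (⨆ i, fderiv ℝ F x (t • v) i) = t * c := by
      obtain ⟨j, hj, hjmax⟩ := exists_max_fin hm (fun i => fderiv ℝ F x (t • v) i)
      rw [hj, hsmul j]
      have h1 : fderiv ℝ F x v j ≤ c := hmax j
      have h2 : c ≤ fderiv ℝ F x v j := by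
        have := hjmax i0
        rw [hsmul j, hsmul i0] at this
        exact le_of_mul_le_mul_left this htpos
      rw [le_antisymm h1 h2]
    have hnorm : ‖t • v‖ ^ 2 = t ^ 2 * ‖v‖ ^ 2 := by
      rw [norm_smul, mul_pow, Real.norm_eq_abs, sq_abs]
    rw [hsup', hnorm, hz] at hle
    -- show t * c + 1/2 * (t^2 * ‖v‖^2) < 0
    have hkey : t * (‖v‖ ^ 2 + 1) = -c := by
      rw [ht, div_mul_cancel₀ _ (ne_of_gt hden)]
    nlinarith [sq_nonneg t, mul_pos htpos htpos]
end

section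
/- Let v ∈ ℝ^n solve min_{v ∈ V} (max_i ∇F_i(x)·v + (1/2)‖v‖²) over a linear subspace V ⊆ ℝ^n. Then v = -∑_{i ∈ I(x,v)} λ_i P_V(∇F_i(x)) for some λ_i ≥ 0 with ∑ λ_i = 1, where I(x,v) = {i : ∇F_i(x)·v = max_j ∇F_j(x)·v} and P_V is the orthogonal projection onto V. -/
/-!
If `v` minimizes `w ↦ max_i ⟪g_i, w⟫ + ½‖w‖²` over `V`, then moving from `v` in a direction
`d ∈ V` cannot decrease the objective to first order; since only the active indices matter
for small steps, some active `i` has `⟪g_i + v, d⟫ ≥ 0`. As `⟪g_i + v, P d⟫ = ⟪P g_i + v, d⟫`,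
no vector strictly separates `-v` from the projected active gradients `P g_i`, so by
Hahn–Banach `-v` lies in their convex hull.
-/

open RealInnerProductSpace Filter Topology

variable {E : Type*} [NormedAddCommGroup E] [InnerProductSpace ℝ E]

theorem exists_active_inner_add_nonneg_of_isMinOn {ι : Type*} [Finite ι] [Nonempty ι]
    {g : ι → E} {V : Submodule ℝ E} {v d : E}
    (hmin : IsMinOn (fun w => (⨆ i, ⟪g i, w⟫) + 1 / 2 * ‖w‖ ^ 2) V v)
    (hv : v ∈ V) (hd : d ∈ V) :
    ∃ i, ⟪g i, v⟫ = ⨆ j, ⟪g j, v⟫ ∧ 0 ≤ ⟪g i + v, d⟫ := by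
  set M := ⨆ j, ⟪g j, v⟫
  have hle : ∀ i w, ⟪g i, w⟫ ≤ ⨆ j, ⟪g j, w⟫ := fun i w =>
    le_ciSup (Set.finite_range fun j => ⟪g j, w⟫).bddAbove i
  -- compare `v` with `v + t • d`, using an index attaining the max at `v + t • d`
  have step : ∀ t : ℝ, ∃ i, M - ⟪g i, v⟫ ≤ t * (⟪g i + v, d⟫ + t / 2 * ‖d‖ ^ 2) := by
    intro t
    obtain ⟨i, hi⟩ := exists_eq_ciSup_of_finite (f := fun j => ⟪g j, v + t • d⟫)
    refine ⟨i, ?_⟩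
    have h := hmin (V.add_mem hv (V.smul_mem t hd))
    simp only [Set.mem_ofPred_eq, ← hi] at h
    rw [inner_add_right, real_inner_smul_right, norm_add_sq_real, real_inner_smul_right,
      norm_smul, Real.norm_eq_abs, mul_pow, sq_abs] at h
    rw [inner_add_left]
    linarith
  obtain ⟨i, hi⟩ : ∃ i, ∃ᶠ t in 𝓝[>] (0 : ℝ),
      M - ⟪g i, v⟫ ≤ t * (⟪g i + v, d⟫ + t / 2 * ‖d‖ ^ 2) :=
    frequently_exists.mp (Eventually.of_forall step).frequently
  have hlim : Tendsto (fun t : ℝ => ⟪g i + v, d⟫ + t / 2 * ‖d‖ ^ 2) (𝓝[>] 0)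
      (𝓝 ⟪g i + v, d⟫) := by
    refine tendsto_nhdsWithin_of_tendsto_nhds <|
      (by fun_prop : Continuous fun t : ℝ => ⟪g i + v, d⟫ + t / 2 * ‖d‖ ^ 2).tendsto' 0 _ ?_
    simp
  refine ⟨i, le_antisymm (hle i v) ?_, ?_⟩
  · have h0 : Tendsto (fun t : ℝ => t * (⟪g i + v, d⟫ + t / 2 * ‖d‖ ^ 2)) (𝓝[>] 0) (𝓝 0) := by
      simpa using (tendsto_nhdsWithin_of_tendsto_nhds tendsto_id).mul hlim
    exact sub_nonpos.mp (ge_of_tendsto_of_frequently h0 hi)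
  · refine ge_of_tendsto_of_frequently hlim ((hi.and_eventually self_mem_nhdsWithin).mono ?_)
    rintro t ⟨ht, htpos⟩
    exact nonneg_of_mul_nonneg_right ((sub_nonneg.mpr (hle i v)).trans ht) htpos

theorem mem_convexHull_of_forall_exists_inner_sub_nonneg [CompleteSpace E] {s : Set E}
    (hs : s.Finite) {p : E} (h : ∀ d, ∃ y ∈ s, 0 ≤ ⟪y - p, d⟫) : p ∈ convexHull ℝ s := by
  by_contra hp
  obtain ⟨f, u, hfp, hfs⟩ := geometric_hahn_banach_point_closed (convex_convexHull ℝ s)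
    (hs.isCompact_convexHull (𝕜 := ℝ)).isClosed hp
  obtain ⟨y, hy, hnonneg⟩ := h (-(InnerProductSpace.toDual ℝ E).symm f)
  have hfy := hfs y (subset_convexHull ℝ s hy)
  rw [inner_neg_right, real_inner_comm, InnerProductSpace.toDual_symm_apply, map_sub] at hnonneg
  linarith

theorem exists_weights_of_mem_convexHull_image {ι : Type*} [Fintype ι] {f : ι → E} {s : Set ι}
    {x : E} (hx : x ∈ convexHull ℝ (f '' s)) :
    ∃ w : ι → ℝ, (∀ i, 0 ≤ w i) ∧ ∑ i, w i = 1 ∧ (∀ i ∉ s, w i = 0) ∧ ∑ i, w i • f i = x := by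
  classical
  let combinations : Set E :=
    {y | ∃ w : ι → ℝ, (∀ i, 0 ≤ w i) ∧ ∑ i, w i = 1 ∧ (∀ i ∉ s, w i = 0) ∧ ∑ i, w i • f i = y}
  refine convexHull_min (t := combinations) ?_ ?_ hx
  · rintro _ ⟨i, hi, rfl⟩
    obtain ⟨hw0, hw1⟩ := single_mem_stdSimplex ℝ i
    exact ⟨_, hw0, hw1, fun _ hj => Pi.single_eq_of_ne (ne_of_mem_of_not_mem hi hj).symm 1,
      by simp⟩
  · rintro _ ⟨w, hw0, hw1, hws, rfl⟩ _ ⟨w', hw0', hw1', hws', rfl⟩ a b ha hb hab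
    refine ⟨a • w + b • w', fun i => ?_, ?_, fun i hi => ?_, ?_⟩
    · simp only [Pi.add_apply, Pi.smul_apply, smul_eq_mul]
      exact add_nonneg (mul_nonneg ha (hw0 i)) (mul_nonneg hb (hw0' i))
    · simp [Finset.sum_add_distrib, ← Finset.mul_sum, hw1, hw1', hab]
    · simp [hws i hi, hws' i hi]
    · simp [add_smul, mul_smul, Finset.sum_add_distrib, ← Finset.smul_sum]

theorem neg_mem_convexHull_starProjection_of_isMinOn [CompleteSpace E] {ι : Type*} [Finite ι]
    [Nonempty ι] {g : ι → E} {V : Submodule ℝ E} [V.HasOrthogonalProjection] {v : E}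
    (hmin : IsMinOn (fun w => (⨆ i, ⟪g i, w⟫) + 1 / 2 * ‖w‖ ^ 2) V v) (hv : v ∈ V) :
    -v ∈ convexHull ℝ ((fun i => V.starProjection (g i)) '' {i | ⟪g i, v⟫ = ⨆ j, ⟪g j, v⟫}) := by
  refine mem_convexHull_of_forall_exists_inner_sub_nonneg ((Set.toFinite _).image _) fun d => ?_
  obtain ⟨i, hi, hnonneg⟩ :=
    exists_active_inner_add_nonneg_of_isMinOn hmin hv (V.starProjection_apply_mem d)
  refine ⟨_, ⟨i, hi, rfl⟩, ?_⟩
  rwa [← V.inner_starProjection_left_eq_right, map_add, V.starProjection_eq_self_iff.mpr hv,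
    ← sub_neg_eq_add] at hnonneg

theorem inner_gradient_eq_fderiv_apply [CompleteSpace E] {ι : Type*} [Fintype ι]
    {F : E → EuclideanSpace ℝ ι} {x : E} (hF : DifferentiableAt ℝ F x) (i : ι) (w : E) :
    ⟪gradient (fun y => F y i) x, w⟫ = fderiv ℝ F x w i := by
  rw [inner_gradient_left]
  exact congrArg (· w) ((PiLp.proj 2 _ i).hasFDerivAt.comp x hF.hasFDerivAt).fderiv

/-- The minimizer of `v ↦ max_i ∇F_i(x)·v + ½‖v‖²` over a linear subspace `V` is
the negative of a convex combination of the projections onto `V` of the gradients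
`∇F_i(x)` for indices `i` attaining the max. -/
theorem minimizer_is_neg_convex_comb_of_projected_gradients (n m : ℕ) (hm : 0 < m)
    (F : EuclideanSpace ℝ (Fin n) → EuclideanSpace ℝ (Fin m))
    (hF : ContDiff ℝ 1 F) (x : EuclideanSpace ℝ (Fin n))
    (V : Submodule ℝ (EuclideanSpace ℝ (Fin n)))
    (v : EuclideanSpace ℝ (Fin n)) (hvV : v ∈ V)
    (hmin : IsMinOn (fun w => (⨆ i, fderiv ℝ F x w i) + (1 / 2) * ‖w‖ ^ 2)
      (V : Set (EuclideanSpace ℝ (Fin n))) v) :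
    ∃ lam : Fin m → ℝ, (∀ i, 0 ≤ lam i) ∧ (∑ i, lam i = 1) ∧
      (∀ i, fderiv ℝ F x v i ≠ (⨆ j, fderiv ℝ F x v j) → lam i = 0) ∧
      v = -∑ i, lam i •
        (V.orthogonalProjectionOnto (gradient (fun y => F y i) x) : EuclideanSpace ℝ (Fin n)) := by
  have hgrad := inner_gradient_eq_fderiv_apply (hF.differentiable one_ne_zero x)
  simp only [← hgrad] at hmin ⊢
  have : Nonempty (Fin m) := ⟨⟨0, hm⟩⟩
  obtain ⟨lam, hlam0, hlam1, hsupp, hsum⟩ :=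
    exists_weights_of_mem_convexHull_image (neg_mem_convexHull_starProjection_of_isMinOn hmin hvV)
  exact ⟨lam, hlam0, hlam1, hsupp, by simp [hsum]⟩
end

section
/- Let F : ℝ^n → ℝ^m be C², R : ℝ^n → ℝ^n a map with R(x) = x and such that lim_{t→0⁺} (R applied along x + tv minus x)/t = v (first-order retraction property at x in direction v). Suppose DF(x)v < 0 componentwise and let β₀ > 0, β ∈ (0,1), σ ∈ (0,1). Then there exists K ∈ ℕ such that for all k > K, F(R(x + β₀β^k v)) < F(x) + σβ₀β^k DF(x)v componentwise. -/
/-!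
By the chain rule, `t ↦ F (R (x + t • v))` has right derivative `DF(x) v` at `0`. Since
`DF(x) v < σ DF(x) v` componentwise, each component of `F (R (x + t • v)) - F x` drops below
`σ t DF(x) v` for all small `t > 0`, and the steps `β₀ βᵏ` tend to `0` from the right.
-/

open Filter Topology Set

theorem hasDerivWithinAt_Ioi_comp_add_smul {E : Type*} [NormedAddCommGroup E] [NormedSpace ℝ E]
    {R : E → E} {x v : E} (hRx : R x = x)
    (hR : Tendsto (fun t : ℝ => t⁻¹ • (R (x + t • v) - x)) (𝓝[>] 0) (𝓝 v)) :
    HasDerivWithinAt (fun t : ℝ => R (x + t • v)) v (Ioi 0) 0 := by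
  rw [hasDerivWithinAt_iff_tendsto_slope' self_notMem_Ioi]
  convert hR using 2 with t
  simp [slope_def_module, hRx]

theorem HasDerivWithinAt.eventually_lt_add_mul_of_lt {g : ℝ → ℝ} {d a : ℝ}
    (hg : HasDerivWithinAt g d (Ioi 0) 0) (hda : d < a) :
    ∀ᶠ t in 𝓝[>] 0, g t < g 0 + t * a := by
  filter_upwards [hg.limsup_slope_le' self_notMem_Ioi hda, self_mem_nhdsWithin] with t hslope ht
  rw [slope_def_field, sub_zero, div_lt_iff₀ ht] at hslope
  linarith

theorem tendsto_const_mul_pow_nhdsWithin_Ioi_zero {c r : ℝ} (hc : 0 < c) (hr₀ : 0 < r)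
    (hr₁ : r < 1) : Tendsto (fun k : ℕ => c * r ^ k) atTop (𝓝[>] 0) := by
  refine tendsto_nhdsWithin_of_tendsto_nhds_of_eventually_within _ ?_
    (Eventually.of_forall fun k => mul_pos hc (pow_pos hr₀ k))
  simpa using (tendsto_pow_atTop_nhds_zero_of_lt_one hr₀.le hr₁).const_mul c

/-- Existence of the Armijo step length along a retraction: if `R(x) = x`,
`(R(x + tv) - x)/t → v` as `t → 0⁺`, and `DF(x)v < 0` componentwise, then for all
sufficiently large `k` the Armijo inequality holds componentwise for step `β₀βᵏ`. -/
theorem armijo_step_retraction (n m : ℕ)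
    (F : EuclideanSpace ℝ (Fin n) → EuclideanSpace ℝ (Fin m))
    (hF : ContDiff ℝ 2 F)
    (R : EuclideanSpace ℝ (Fin n) → EuclideanSpace ℝ (Fin n))
    (x v : EuclideanSpace ℝ (Fin n)) (hRx : R x = x)
    (hR : Tendsto (fun t : ℝ => t⁻¹ • (R (x + t • v) - x))
      (nhdsWithin 0 (Set.Ioi 0)) (𝓝 v))
    (hdesc : ∀ i, fderiv ℝ F x v i < 0)
    (β₀ β σ : ℝ) (hβ₀ : 0 < β₀) (hβ : β ∈ Set.Ioo (0 : ℝ) 1)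
    (hσ : σ ∈ Set.Ioo (0 : ℝ) 1) :
    ∃ K : ℕ, ∀ k > K, ∀ i,
      F (R (x + (β₀ * β ^ k) • v)) i <
        F x i + σ * (β₀ * β ^ k) * fderiv ℝ F x v i := by
  have hFx : HasFDerivAt F (fderiv ℝ F x) (R (x + (0 : ℝ) • v)) := by
    simpa [hRx] using (hF.differentiable (by norm_num) x).hasFDerivAt
  have hcurve : ∀ i, HasDerivWithinAt (fun t : ℝ => F (R (x + t • v)) i)
      (fderiv ℝ F x v i) (Ioi 0) 0 := fun i =>
    (EuclideanSpace.proj (𝕜 := ℝ) i).hasFDerivAt.comp_hasDerivWithinAt (x := 0)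
      (hFx.comp_hasDerivWithinAt 0 (hasDerivWithinAt_Ioi_comp_add_smul hRx hR))
  have harmijo : ∀ᶠ t in 𝓝[>] 0, ∀ i,
      F (R (x + t • v)) i < F x i + σ * t * fderiv ℝ F x v i := by
    refine eventually_all.2 fun i => ?_
    have hσd : fderiv ℝ F x v i < σ * fderiv ℝ F x v i := by nlinarith [hdesc i, hσ.2]
    filter_upwards [(hcurve i).eventually_lt_add_mul_of_lt hσd] with t ht
    simpa [hRx, mul_assoc, mul_left_comm] using ht
  obtain ⟨K, hK⟩ := eventually_atTop.1
    ((tendsto_const_mul_pow_nhdsWithin_Ioi_zero hβ₀ hβ.1 hβ.2).eventually harmijo)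
  exact ⟨K, fun k hk => hK k hk.le⟩
end

section
/- Let G : ℝ^n → ℝ^{m_G} be C² with retraction π satisfying lim_{t→0⁺}(π(x+tv)-x)/t = v and π continuous. Let x be feasible (G(x) ≤ 0), ε ≥ 0, and v satisfy ∇G_i(x)·v < 0 for all i ∈ I_ε(x) = {i : G_i(x) ≥ -ε}. Fix β₀ > 0, β ∈ (0,1). Then there exists K ∈ ℕ such that G(π(x + β₀β^k v)) ≤ 0 componentwise for all k > K. -/
/-!
Along the curve `t ↦ π (x + t • v)` the right derivative of `G` at `t = 0` is `∇G(x) v`, by the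
chain rule applied to the first-order retraction condition. An `ε`-active constraint therefore
strictly decreases for small `t > 0` from a nonpositive value, while an inactive one stays
negative by continuity. The step sizes `β₀ βᵏ` tend to `0⁺`, so eventually all constraints hold.
-/

open Filter Topology

section RightDerivative

variable {𝕜 E F : Type*} [NontriviallyNormedField 𝕜]
  [NormedAddCommGroup E] [NormedSpace 𝕜 E] [NormedAddCommGroup F] [NormedSpace 𝕜 F]

theorem tendsto_nhds_zero_of_tendsto_inv_smul {l : Filter 𝕜} (hl : l ≤ 𝓝[≠] 0) {d : 𝕜 → E}
    {v : E} (h : Tendsto (fun t => t⁻¹ • d t) l (𝓝 v)) : Tendsto d l (𝓝 0) := by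
  have hlim : Tendsto (fun t => t • t⁻¹ • d t) l (𝓝 ((0 : 𝕜) • v)) :=
    (tendsto_nhdsWithin_of_tendsto_nhds tendsto_id |>.mono_left hl).smul h
  rw [zero_smul] at hlim
  refine hlim.congr' ?_
  filter_upwards [hl self_mem_nhdsWithin] with t ht using smul_inv_smul₀ ht _

theorem HasFDerivAt.tendsto_inv_smul_sub_comp {f : E → F} {f' : E →L[𝕜] F} {x v : E}
    (hf : HasFDerivAt f f' x) {l : Filter 𝕜} (hl : l ≤ 𝓝[≠] 0) {γ : 𝕜 → E}
    (hγ : Tendsto (fun t => t⁻¹ • (γ t - x)) l (𝓝 v)) :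
    Tendsto (fun t => t⁻¹ • (f (γ t) - f x)) l (𝓝 (f' v)) := by
  simpa only [add_sub_cancel] using (hasFDerivWithinAt_univ.2 hf).lim
    (tendsto_nhds_zero_of_tendsto_inv_smul hl hγ) (.of_forall fun _ => Set.mem_univ _) hγ

end RightDerivative

theorem eventually_nonpos_of_tendsto_inv_smul_sub {g : ℝ → ℝ} {a d : ℝ}
    (hg : Tendsto (fun t => t⁻¹ • (g t - a)) (𝓝[>] 0) (𝓝 d)) (ha : a ≤ 0) (had : a < 0 ∨ d < 0) :
    ∀ᶠ t in 𝓝[>] 0, g t ≤ 0 := by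
  rcases had with ha | hd
  · have hga : Tendsto g (𝓝[>] 0) (𝓝 a) := by
      simpa using (tendsto_nhds_zero_of_tendsto_inv_smul (nhdsGT_le_nhdsNE 0) hg).add_const a
    filter_upwards [hga.eventually_lt_const ha] with t ht using ht.le
  · filter_upwards [hg.eventually_lt_const hd, self_mem_nhdsWithin] with t hq (ht : 0 < t)
    rw [smul_eq_mul] at hq
    nlinarith [inv_pos.2 ht]

theorem tendsto_const_mul_pow_nhdsGT_zero {c r : ℝ} (hc : 0 < c) (h₀ : 0 < r) (h₁ : r < 1) :
    Tendsto (fun k : ℕ => c * r ^ k) atTop (𝓝[>] 0) :=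
  tendsto_nhdsWithin_iff.2
    ⟨by simpa using (tendsto_pow_atTop_nhds_zero_of_lt_one h₀.le h₁).const_mul c,
      .of_forall fun k => mul_pos hc (pow_pos h₀ k)⟩

theorem retracted_steps_feasible_general (n mG : ℕ)
    (G : EuclideanSpace ℝ (Fin n) → EuclideanSpace ℝ (Fin mG))
    (hG : ContDiff ℝ 2 G)
    (π : EuclideanSpace ℝ (Fin n) → EuclideanSpace ℝ (Fin n))
    (x v : EuclideanSpace ℝ (Fin n))
    (hπlim : Tendsto (fun t : ℝ => t⁻¹ • (π (x + t • v) - x))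
      (nhdsWithin 0 (Set.Ioi 0)) (𝓝 v))
    (hfeas : ∀ i, G x i ≤ 0)
    (ε : ℝ) (hε : 0 ≤ ε)
    (hv : ∀ i, -ε ≤ G x i → fderiv ℝ G x v i < 0)
    (β₀ β : ℝ) (hβ₀ : 0 < β₀) (hβ : β ∈ Set.Ioo (0 : ℝ) 1) :
    ∃ K : ℕ, ∀ k > K, ∀ i, G (π (x + (β₀ * β ^ k) • v)) i ≤ 0 := by
  have hGx : HasFDerivAt G (fderiv ℝ G x) x :=
    (hG.differentiable two_ne_zero x).hasFDerivAt
  have hsmall : ∀ᶠ t in 𝓝[>] (0 : ℝ), ∀ i, G (π (x + t • v)) i ≤ 0 := by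
    refine eventually_all.2 fun i =>
      eventually_nonpos_of_tendsto_inv_smul_sub (d := fderiv ℝ G x v i) ?_ (hfeas i) ?_
    · exact ((EuclideanSpace.proj i).hasFDerivAt.comp x hGx).tendsto_inv_smul_sub_comp
        (nhdsGT_le_nhdsNE 0) hπlim
    · by_cases hi : -ε ≤ G x i
      · exact .inr (hv i hi)
      · exact .inl (by linarith)
  obtain ⟨K, hK⟩ :=
    eventually_atTop.1 ((tendsto_const_mul_pow_nhdsGT_zero hβ₀ hβ.1 hβ.2).eventually hsmall)
  exact ⟨K, fun k hk => hK k hk.le⟩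

/-- Feasibility of small retracted steps: if `v` is strictly feasible with respect to
the `ε`-active inequality constraints at a feasible point `x`, then the retracted
points `π(x + β₀βᵏ v)` are feasible for all sufficiently large `k`. -/
theorem retracted_steps_feasible (n mG : ℕ)
    (G : EuclideanSpace ℝ (Fin n) → EuclideanSpace ℝ (Fin mG))
    (hG : ContDiff ℝ 2 G)
    (π : EuclideanSpace ℝ (Fin n) → EuclideanSpace ℝ (Fin n))
    (hπcont : Continuous π)
    (x v : EuclideanSpace ℝ (Fin n)) (hπx : π x = x)
    (hπlim : Tendsto (fun t : ℝ => t⁻¹ • (π (x + t • v) - x))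
      (nhdsWithin 0 (Set.Ioi 0)) (𝓝 v))
    (hfeas : ∀ i, G x i ≤ 0)
    (ε : ℝ) (hε : 0 ≤ ε)
    (hv : ∀ i, -ε ≤ G x i → fderiv ℝ G x v i < 0)
    (β₀ β : ℝ) (hβ₀ : 0 < β₀) (hβ : β ∈ Set.Ioo (0 : ℝ) 1) :
    ∃ K : ℕ, ∀ k > K, ∀ i, G (π (x + (β₀ * β ^ k) • v)) i ≤ 0 :=
  retracted_steps_feasible_general n mG G hG π x v hπlim hfeas ε hε hv β₀ β hβ₀ hβ
end
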